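/- Consider the two-player mean-payoff game G with players ○ and □, vertices a and c controlled by ○ and vertices b and d controlled by □, and edges with weights (π_○, π_□): a → b with weight (0, 3), b → a with weight (0, 3), a → c with weight (0, 0), c → c with weight (1, 1), b → d with weight (0, 0), d → d with weight (2, 2). Then G admits no SPE from vertex a and no SPE from vertex b. -/

import Mathlib

noncomputable section

open Filter

/-- Prepend a finite list to an infinite sequence. -/
def prependList {V : Type} (h : List V) (ρ : ℕ → V) : ℕ → V :=
  fun n => if hn : n < h.length then h.get ⟨n, hn⟩ else ρ (n - h.length)

/-- A (turn-based, multiplayer) game on a graph: a finite directed graph `(V, E)`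
in which every vertex has an outgoing edge, a partition of the vertices among the
players (given by `control`), and an outcome function `payoff : Π → V^ω → ℝ`. -/
structure GameStruct (P V : Type) where
  E : V → V → Prop
  total : ∀ v, ∃ w, E v w
  control : V → P
  payoff : P → (ℕ → V) → ℝ

namespace GameStruct

variable {P V : Type}

/-- A strategy: given the history before the current vertex and the current vertex,
choose a successor along an edge. -/
structure Strategy (G : GameStruct P V) where
  toFun : List V → V → V
  valid : ∀ h v, G.E v (toFun h v)

/-- A complete strategy profile. -/
abbrev Profile (G : GameStruct P V) := P → G.Strategy

def step (G : GameStruct P V) (σ : G.Profile) (p : List V × V) : List V × V :=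
  (p.1 ++ [p.2], (σ (G.control p.2)).toFun p.1 p.2)

/-- The play induced by the profile `σ` from vertex `v`, after the past history `h`. -/
def play (G : GameStruct P V) (σ : G.Profile) (h : List V) (v : V) : ℕ → V :=
  fun n => ((G.step σ)^[n] (h, v)).2

/-- An infinite path in the graph. -/
def IsPlay (G : GameStruct P V) (ρ : ℕ → V) : Prop := ∀ n, G.E (ρ n) (ρ (n + 1))

def IsPlayFrom (G : GameStruct P V) (v₀ : V) (ρ : ℕ → V) : Prop := ρ 0 = v₀ ∧ G.IsPlay ρ

/-- A history: a finite nonempty path. -/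
def IsHist (G : GameStruct P V) (H : List V) : Prop := H ≠ [] ∧ List.Chain' G.E H

/-- `hv` is a history of the initialized game `G_{∥v₀}` (here `h` is the part strictly
before the last vertex `v`; it may be empty, in which case `v = v₀`). -/
def IsHistFrom (G : GameStruct P V) (v₀ : V) (h : List V) (v : V) : Prop :=
  List.Chain' G.E (h ++ [v]) ∧ (h ++ [v]).head? = some v₀

/-- The (finite) history `H` is compatible with the strategy `σ` of player `j`. -/
def CompatList (G : GameStruct P V) (σ : G.Strategy) (j : P) (H : List V) : Prop :=
  ∀ k u w, H[k]? = some u → H[k + 1]? = some w → G.control u = j →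
    w = σ.toFun (H.take k) u

/-- The history `H` is compatible with `σ̄_{-i}`, i.e. with every strategy of the
profile except possibly that of player `i`. -/
def CompatExcept (G : GameStruct P V) (i : P) (σ : G.Profile) (H : List V) : Prop :=
  ∀ j, j ≠ i → G.CompatList (σ j) j H

/-- A play `ρ` is `l`-consistent for the requirement `l : V → ℝ ∪ {±∞}`. -/
def Consistent (G : GameStruct P V) (l : V → EReal) (ρ : ℕ → V) : Prop :=
  ∀ n, l (ρ n) ≤ (G.payoff (G.control (ρ n)) (fun k => ρ (n + k)) : EReal)

variable [DecidableEq P]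

/-- The set of `l`-rational strategy profiles (for the players other than `i`) from `v`.
A profile is identified with a complete profile whose `i`-component is irrelevant. -/
def LamRat (G : GameStruct P V) (l : V → EReal) (i : P) (v : V) : Set G.Profile :=
  { σ | ∃ σi : G.Strategy, ∀ h w, G.IsHistFrom v h w → G.CompatExcept i σ (h ++ [w]) →
      G.Consistent l (G.play (Function.update σ i σi) h w) }

/-- `sup_{σ_i} μ_i(⟨σ̄_{-i}, σ_i⟩_v)`. -/
def valAgainst (G : GameStruct P V) (i : P) (σ : G.Profile) (v : V) : EReal :=
  ⨆ σi : G.Strategy, (G.payoff i (G.play (Function.update σ i σi) [] v) : EReal)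

/-- The negotiation function, with the convention `inf ∅ = +∞`. -/
def nego (G : GameStruct P V) (l : V → EReal) : V → EReal :=
  fun v => ⨅ σ ∈ G.LamRat l (G.control v) v, G.valAgainst (G.control v) σ v

/-- A game with steady negotiation. -/
def SteadyNego (G : GameStruct P V) : Prop :=
  ∀ (i : P) (v : V) (l : V → EReal),
    G.LamRat l i v = ∅ ∨
      ∃ σ ∈ G.LamRat l i v, ∀ τ ∈ G.LamRat l i v, G.valAgainst i σ v ≤ G.valAgainst i τ v

/-- Nash equilibrium in `G_{∥v₀}`. -/
def IsNE (G : GameStruct P V) (v₀ : V) (σ : G.Profile) : Prop :=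
  ∀ (i : P) (σ' : G.Strategy),
    G.payoff i (G.play (Function.update σ i σ') [] v₀) ≤ G.payoff i (G.play σ [] v₀)

/-- `ε`-subgame-perfect equilibrium in `G_{∥v₀}`. -/
def IsEpsSPE (G : GameStruct P V) (v₀ : V) (ε : ℝ) (σ : G.Profile) : Prop :=
  ∀ h v, G.IsHistFrom v₀ h v → ∀ (i : P) (σ' : G.Strategy),
    G.payoff i (prependList h (G.play (Function.update σ i σ') h v)) ≤
      G.payoff i (prependList h (G.play σ h v)) + ε

/-- `l` is an `ε`-fixed point of the negotiation function (`±∞` is within `ε` of itself). -/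
def IsEFix (G : GameStruct P V) (ε : ℝ) (l : V → EReal) : Prop :=
  ∀ v, l v - (ε : EReal) ≤ G.nego l v ∧ G.nego l v ≤ l v + (ε : EReal)

/-- Prefix-independent game. -/
def PrefixIndependent (G : GameStruct P V) : Prop :=
  ∀ (h : List V) (ρ : ℕ → V), G.IsHist h → G.IsPlay ρ → ∀ i,
    G.payoff i (prependList h ρ) = G.payoff i ρ

/-- Well-initialized game: every vertex is reachable from `v₀`. -/
def WellInit (G : GameStruct P V) (v₀ : V) : Prop :=
  ∀ v, Relation.ReflTransGen G.E v₀ v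

/-- `G` is the mean-payoff game given by the weight function `π`. -/
def IsMeanPayoff (G : GameStruct P V) (π : P → V → V → ℚ) : Prop :=
  ∀ i ρ, G.payoff i ρ =
    Filter.liminf
      (fun n : ℕ => (∑ k ∈ Finset.range n, (π i (ρ k) (ρ (k + 1)) : ℝ)) / n)
      Filter.atTop

end GameStruct

/-! The concrete games of Examples 2 and 3 of the paper. -/

inductive Pl2 where
  | circ : Pl2
  | sq : Pl2
deriving DecidableEq

instance : Fintype Pl2 :=
  Fintype.ofList [Pl2.circ, Pl2.sq] (by intro x; cases x <;> simp)

inductive V16 where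
  | a : V16
  | b : V16
  | c : V16
  | d : V16
deriving DecidableEq

instance : Fintype V16 :=
  Fintype.ofList [V16.a, V16.b, V16.c, V16.d] (by intro x; cases x <;> simp)

def E16 : V16 → V16 → Prop := fun u v =>
  match u, v with
  | .a, .b => True
  | .b, .a => True
  | .a, .c => True
  | .c, .c => True
  | .b, .d => True
  | .d, .d => True
  | _, _ => False

def ctrl16 : V16 → Pl2 := fun v =>
  match v with
  | .a => .circ
  | .c => .circ
  | .b => .sq
  | .d => .sq

def w16 : Pl2 → V16 → V16 → ℚ
  | .circ, .a, .b => 0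
  | .sq, .a, .b => 3
  | .circ, .b, .a => 0
  | .sq, .b, .a => 3
  | .circ, .a, .c => 0
  | .sq, .a, .c => 0
  | .circ, .c, .c => 1
  | .sq, .c, .c => 1
  | .circ, .b, .d => 0
  | .sq, .b, .d => 0
  | .circ, .d, .d => 2
  | .sq, .d, .d => 2
  | _, _, _ => 0


/-! Deviating to the sink `c` guarantees `○` the payoff `1` at `a`, and deviating to the sink `d`
guarantees `□` the payoff `2` at `b`. So in an SPE the play from any history ending in `b` can
neither end in `c` (worth `1` to `□`) nor cycle through `a` and `b` forever (worth `0` to `○` in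
the subgame after the first move); it ends in `d`. Hence `○`, who can reach `d` and get `2` by
moving from `a` to `b`, always does so instead of settling for `c`. But then `□` gains by always
moving from `b` back to `a`: the play cycles forever, worth `3 > 2` to `□`. -/

namespace GameStruct

variable {P V : Type} {G : GameStruct P V}

theorem play_zero (σ : G.Profile) (h : List V) (v : V) : G.play σ h v 0 = v := rfl

theorem play_succ (σ : G.Profile) (h : List V) (v : V) (n : ℕ) :
    G.play σ h v (n + 1) = G.play σ (h ++ [v]) ((σ (G.control v)).toFun h v) n := by
  simp only [play, Function.iterate_succ_apply]
  rfl

theorem play_succ_eq_play_one (σ : G.Profile) (h : List V) (v : V) (n : ℕ) :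
    G.play σ h v (n + 1) = G.play σ (h ++ [v]) (G.play σ h v 1) n := by
  rw [play_succ, play_succ, play_zero]

theorem isPlay_play (σ : G.Profile) (h : List V) (v : V) : G.IsPlay (G.play σ h v) := by
  intro n
  simp only [play, Function.iterate_succ_apply']
  exact (σ _).valid _ _

theorem play_congr {σ τ : G.Profile} :
    ∀ (n : ℕ) (h : List V) (v : V), (∀ h' v', h <+: h' →
      (σ (G.control v')).toFun h' v' = (τ (G.control v')).toFun h' v') →
      G.play σ h v n = G.play τ h v n
  | 0, _, _, _ => rfl
  | n + 1, h, v, hagree => by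
    rw [play_succ, play_succ, hagree h v List.prefix_rfl]
    exact play_congr n _ _ fun h' v' hh' => hagree h' v' ((List.prefix_append h [v]).trans hh')

theorem IsHistFrom.snoc {v₀ : V} {h : List V} {v w : V} (hh : G.IsHistFrom v₀ h v)
    (hvw : G.E v w) : G.IsHistFrom v₀ (h ++ [v]) w := by
  obtain ⟨hchain, hhead⟩ := hh
  refine ⟨?_, by rw [List.head?_append, hhead]; rfl⟩
  rw [List.Chain', List.isChain_append]
  refine ⟨hchain, List.isChain_singleton w, fun x hx y hy => ?_⟩
  rw [List.getLast?_concat, Option.mem_some_iff] at hx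
  rw [List.head?_cons, Option.mem_some_iff] at hy
  exact hx ▸ hy ▸ hvw

theorem IsHistFrom.step {v₀ : V} (σ : G.Profile) {p : List V × V}
    (hp : G.IsHistFrom v₀ p.1 p.2) : G.IsHistFrom v₀ (G.step σ p).1 (G.step σ p).2 :=
  hp.snoc ((σ _).valid _ _)

def Strategy.positional (f : V → V) (hf : ∀ v, G.E v (f v)) : G.Strategy :=
  ⟨fun _ v => f v, fun _ v => hf v⟩

open Classical in
def Strategy.deviate (s : G.Strategy) (h : List V) (v w : V) (hvw : G.E v w) : G.Strategy :=
  ⟨fun h' v' => if h' = h ∧ v' = v then w else s.toFun h' v', fun h' v' => by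
    split_ifs with hh
    · exact hh.2 ▸ hvw
    · exact s.valid h' v'⟩

variable [DecidableEq P]

theorem play_update_deviate_succ (σ : G.Profile) {i : P} {h : List V} {v w : V}
    (hv : G.control v = i) (hvw : G.E v w) (n : ℕ) :
    G.play (Function.update σ i ((σ i).deviate h v w hvw)) h v (n + 1) =
      G.play σ (h ++ [v]) w n := by
  rw [play_succ, hv, Function.update_self]
  simp only [Strategy.deviate, and_self, if_true]
  refine play_congr n _ _ fun h' v' hh' => ?_
  have hne : h' ≠ h := fun heq => by
    have := hh'.length_le
    simp [heq] at this
  by_cases hi : G.control v' = i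
  · rw [hi, Function.update_self]
    simp [hne]
  · rw [Function.update_of_ne hi]

end GameStruct

open GameStruct Topology

theorem eq_of_absorbing {V : Type} {R : V → V → Prop} {ρ : ℕ → V}
    (hρ : ∀ n, R (ρ n) (ρ (n + 1))) {x : V} (hx : ∀ y, R x y → y = x) {N : ℕ} (hN : ρ N = x) :
    ∀ n, N ≤ n → ρ n = x := by
  intro n hn
  induction n, hn using Nat.le_induction with
  | base => exact hN
  | succ n _ ih => exact hx _ (ih ▸ hρ n)

theorem eventually_prependList {V : Type} {R : V → V → Prop} {ρ : ℕ → V} (h : List V)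
    (hρ : ∀ᶠ n in atTop, R (ρ n) (ρ (n + 1))) :
    ∀ᶠ n in atTop, R (prependList h ρ n) (prependList h ρ (n + 1)) := by
  filter_upwards [(tendsto_sub_atTop_nat h.length).eventually hρ,
    eventually_ge_atTop h.length] with n hR hn
  have hn' : ¬ n + 1 < h.length := by omega
  simpa [prependList, Nat.not_lt.2 hn, hn', Nat.sub_add_comm hn] using hR

theorem GameStruct.IsMeanPayoff.payoff_prependList_eq {P V : Type} {G : GameStruct P V}
    {π : P → V → V → ℚ} (hmp : G.IsMeanPayoff π) {i : P} {ρ : ℕ → V} {r : ℚ} (h : List V)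
    (hρ : ∀ᶠ n in atTop, π i (ρ n) (ρ (n + 1)) = r) :
    G.payoff i (prependList h ρ) = r := by
  rw [hmp]
  refine Tendsto.liminf_eq ?_
  have hconst : Tendsto (fun n => (π i (prependList h ρ n) (prependList h ρ (n + 1)) : ℝ))
      atTop (𝓝 (r : ℝ)) :=
    tendsto_const_nhds.congr' <| (eventually_prependList (R := fun x y => π i x y = r) h hρ).mono
      fun n hn => by simp only [hn]
  simpa only [div_eq_inv_mul] using hconst.cesaro

theorem eq_b_or_eq_c_of_E16_a {y : V16} (hy : E16 .a y) : y = .b ∨ y = .c := by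
  cases y <;> first | exact hy.elim | simp

theorem eq_a_or_eq_d_of_E16_b {y : V16} (hy : E16 .b y) : y = .a ∨ y = .d := by
  cases y <;> first | exact hy.elim | simp

theorem eq_c_of_E16_c {y : V16} (hy : E16 .c y) : y = .c := by
  cases y <;> first | rfl | exact hy.elim

theorem eq_d_of_E16_d {y : V16} (hy : E16 .d y) : y = .d := by
  cases y <;> first | rfl | exact hy.elim

section MeanPayoff

variable {G : GameStruct Pl2 V16} {ρ : ℕ → V16}

theorem payoff_prependList_of_visits_absorbing (hmp : G.IsMeanPayoff w16)
    (hρ : ∀ n, E16 (ρ n) (ρ (n + 1))) {x : V16} (hx : ∀ y, E16 x y → y = x)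
    (hvis : ∃ N, ρ N = x) (h : List V16) (i : Pl2) :
    G.payoff i (prependList h ρ) = w16 i x x := by
  obtain ⟨N, hN⟩ := hvis
  have hstay := eq_of_absorbing hρ hx hN
  refine hmp.payoff_prependList_eq h (eventually_atTop.2 ⟨N, fun n hn => ?_⟩)
  rw [hstay n hn, hstay (n + 1) (by omega)]

theorem payoff_prependList_of_visits_c (hmp : G.IsMeanPayoff w16)
    (hρ : ∀ n, E16 (ρ n) (ρ (n + 1))) (hvis : ∃ N, ρ N = .c) (h : List V16) (i : Pl2) :
    G.payoff i (prependList h ρ) = 1 := by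
  have hw : w16 i .c .c = 1 := by cases i <;> rfl
  rw [payoff_prependList_of_visits_absorbing hmp hρ (fun _ => eq_c_of_E16_c) hvis h i, hw,
    Rat.cast_one]

theorem payoff_prependList_of_visits_d (hmp : G.IsMeanPayoff w16)
    (hρ : ∀ n, E16 (ρ n) (ρ (n + 1))) (hvis : ∃ N, ρ N = .d) (h : List V16) (i : Pl2) :
    G.payoff i (prependList h ρ) = 2 := by
  have hw : w16 i .d .d = 2 := by cases i <;> rfl
  rw [payoff_prependList_of_visits_absorbing hmp hρ (fun _ => eq_d_of_E16_d) hvis h i, hw,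
    Rat.cast_ofNat]

theorem payoff_prependList_of_forall_ab (hmp : G.IsMeanPayoff w16)
    (hρ : ∀ n, E16 (ρ n) (ρ (n + 1))) (hab : ∀ n, ρ n = .a ∨ ρ n = .b) (h : List V16) :
    G.payoff .circ (prependList h ρ) = 0 ∧ G.payoff .sq (prependList h ρ) = 3 := by
  have hw : ∀ n, w16 .circ (ρ n) (ρ (n + 1)) = 0 ∧ w16 .sq (ρ n) (ρ (n + 1)) = 3 := by
    intro n
    have hn := hρ n
    rcases hab n with hx | hx <;> rcases hab (n + 1) with hy | hy <;>
      rw [hx, hy] at hn ⊢ <;> first | exact hn.elim | exact ⟨rfl, rfl⟩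
  constructor
  · simpa using hmp.payoff_prependList_eq h (Eventually.of_forall fun n => (hw n).1)
  · simpa using hmp.payoff_prependList_eq h (Eventually.of_forall fun n => (hw n).2)

end MeanPayoff

def cycleAB : V16 → V16
  | .a => .b
  | .b => .a
  | .c => .c
  | .d => .d

theorem E16_cycleAB (v : V16) : E16 v (cycleAB v) := by
  cases v <;> trivial

theorem E16_play {G : GameStruct Pl2 V16} (hE : G.E = E16) (σ : G.Profile) (h : List V16)
    (v : V16) (n : ℕ) :
    E16 (G.play σ h v n) (G.play σ h v (n + 1)) :=
  hE ▸ isPlay_play σ h v n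

section NoSPE

variable {G : GameStruct Pl2 V16} {v₀ : V16} {σ : G.Profile}

theorem GameStruct.IsEpsSPE.one_le_payoff_circ (hE : G.E = E16) (hc : G.control = ctrl16)
    (hmp : G.IsMeanPayoff w16) (hσ : G.IsEpsSPE v₀ 0 σ) {h : List V16}
    (hh : G.IsHistFrom v₀ h .a) : 1 ≤ G.payoff .circ (prependList h (G.play σ h .a)) := by
  have hac : G.E .a .c := hE ▸ trivial
  have hdev := hσ h .a hh .circ ((σ .circ).deviate h .a .c hac)
  rwa [payoff_prependList_of_visits_c hmp (E16_play hE _ h .a)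
    ⟨1, play_update_deviate_succ σ (hc ▸ rfl) hac 0⟩, add_zero] at hdev

theorem GameStruct.IsEpsSPE.two_le_payoff_sq (hE : G.E = E16) (hc : G.control = ctrl16)
    (hmp : G.IsMeanPayoff w16) (hσ : G.IsEpsSPE v₀ 0 σ) {h : List V16}
    (hh : G.IsHistFrom v₀ h .b) : 2 ≤ G.payoff .sq (prependList h (G.play σ h .b)) := by
  have hbd : G.E .b .d := hE ▸ trivial
  have hdev := hσ h .b hh .sq ((σ .sq).deviate h .b .d hbd)
  rwa [payoff_prependList_of_visits_d hmp (E16_play hE _ h .b)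
    ⟨1, play_update_deviate_succ σ (hc ▸ rfl) hbd 0⟩, add_zero] at hdev

theorem GameStruct.IsEpsSPE.exists_play_eq_d (hE : G.E = E16) (hc : G.control = ctrl16)
    (hmp : G.IsMeanPayoff w16) (hσ : G.IsEpsSPE v₀ 0 σ) {h : List V16}
    (hh : G.IsHistFrom v₀ h .b) : ∃ n, G.play σ h .b n = .d := by
  have hρ := E16_play hE σ h .b
  by_cases hvis_c : ∃ n, G.play σ h .b n = .c
  · have := payoff_prependList_of_visits_c hmp hρ hvis_c h .sq
    linarith [hσ.two_le_payoff_sq hE hc hmp hh]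
  by_contra hvis_d
  push Not at hvis_c hvis_d
  have hab : ∀ n, G.play σ h .b n = .a ∨ G.play σ h .b n = .b := fun n => by
    cases hn : G.play σ h .b n
    exacts [Or.inl rfl, Or.inr rfl, (hvis_c n hn).elim, (hvis_d n hn).elim]
  -- the `a`-subgame after `□`'s first move cycles forever, leaving `○` with `0 < 1`
  have h1 : G.play σ h .b 1 = .a := (eq_a_or_eq_d_of_E16_b (hρ 0)).resolve_right (hvis_d 1)
  have hsub := hσ.one_le_payoff_circ hE hc hmp (hh.snoc (hE ▸ trivial))
  have hab_sub : ∀ n, G.play σ (h ++ [.b]) .a n = .a ∨ G.play σ (h ++ [.b]) .a n = .b :=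
    fun n => by simpa [← h1, ← play_succ_eq_play_one] using hab (n + 1)
  have := (payoff_prependList_of_forall_ab hmp (E16_play hE σ _ .a) hab_sub (h ++ [.b])).1
  linarith

theorem GameStruct.IsEpsSPE.toFun_circ_a_eq_b (hE : G.E = E16) (hc : G.control = ctrl16)
    (hmp : G.IsMeanPayoff w16) (hσ : G.IsEpsSPE v₀ 0 σ) {h : List V16}
    (hh : G.IsHistFrom v₀ h .a) : (σ .circ).toFun h .a = .b := by
  have hca : G.control .a = .circ := hc ▸ rfl
  have hab : G.E .a .b := hE ▸ trivial
  have hdev := hσ h .a hh .circ ((σ .circ).deviate h .a .b hab)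
  obtain ⟨n, hn⟩ := hσ.exists_play_eq_d hE hc hmp (hh.snoc hab)
  rw [payoff_prependList_of_visits_d hmp (E16_play hE _ h .a)
    ⟨n + 1, (play_update_deviate_succ σ hca hab n).trans hn⟩] at hdev
  have h1 : G.play σ h .a 1 = (σ .circ).toFun h .a := by rw [play_succ, play_zero, hca]
  rcases eq_b_or_eq_c_of_E16_a (h1 ▸ E16_play hE σ h .a 0) with hmove | hmove
  · exact hmove
  · rw [payoff_prependList_of_visits_c hmp (E16_play hE σ h .a) ⟨1, h1.trans hmove⟩] at hdev
    norm_num at hdev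

theorem not_isEpsSPE_zero_of_isHistFrom_b (hE : G.E = E16) (hc : G.control = ctrl16)
    (hmp : G.IsMeanPayoff w16) {h₀ : List V16} (hh₀ : G.IsHistFrom v₀ h₀ .b) :
    ¬ G.IsEpsSPE v₀ 0 σ := by
  intro hσ
  let cycle : G.Strategy := Strategy.positional cycleAB (hE ▸ E16_cycleAB)
  let τ := Function.update σ .sq cycle
  have hinv : Set.MapsTo (G.step τ) {p | G.IsHistFrom v₀ p.1 p.2 ∧ (p.2 = .a ∨ p.2 = .b)}
      {p | G.IsHistFrom v₀ p.1 p.2 ∧ (p.2 = .a ∨ p.2 = .b)} := by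
    rintro ⟨h, v⟩ ⟨hh, rfl | rfl⟩ <;> refine ⟨hh.step τ, ?_⟩
    · right
      change (τ (G.control .a)).toFun h .a = .b
      rw [show G.control .a = .circ from hc ▸ rfl,
        show τ .circ = σ .circ from Function.update_of_ne (by decide) _ _]
      exact hσ.toFun_circ_a_eq_b hE hc hmp hh
    · left
      change (τ (G.control .b)).toFun h .b = .a
      rw [show G.control .b = .sq from hc ▸ rfl, show τ .sq = cycle from Function.update_self ..]
      rfl
  have hab : ∀ n, G.play τ h₀ .b n = .a ∨ G.play τ h₀ .b n = .b :=
    fun n => (hinv.iterate n ⟨hh₀, Or.inr rfl⟩).2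
  have hdev := hσ h₀ .b hh₀ .sq cycle
  rw [(payoff_prependList_of_forall_ab hmp (E16_play hE τ h₀ .b) hab h₀).2,
    payoff_prependList_of_visits_d hmp (E16_play hE σ h₀ .b)
      (hσ.exists_play_eq_d hE hc hmp hh₀)] at hdev
  norm_num at hdev

end NoSPE

open GameStruct in
/-- The mean-payoff game of Example 2 admits no SPE from vertex `a`
and no SPE from vertex `b`. -/
theorem example_game_no_SPE
    (G : GameStruct Pl2 V16) (hE : G.E = E16) (hc : G.control = ctrl16)
    (hmp : G.IsMeanPayoff w16) :
    (¬ ∃ σ : G.Profile, G.IsEpsSPE V16.a 0 σ) ∧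
      (¬ ∃ σ : G.Profile, G.IsEpsSPE V16.b 0 σ) := by
  have hab : G.IsHistFrom .a [.a] .b := ⟨List.isChain_pair.2 (hE ▸ trivial), rfl⟩
  have hb : G.IsHistFrom .b [] .b := ⟨List.isChain_singleton _, rfl⟩
  exact ⟨fun ⟨_, hσ⟩ => not_isEpsSPE_zero_of_isHistFrom_b hE hc hmp hab hσ,
    fun ⟨_, hσ⟩ => not_isEpsSPE_zero_of_isHistFrom_b hE hc hmp hb hσ⟩
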